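/- Let N ≥ 2. The set { h_K|_{S^{N-1}} : K ⊆ ℝ^N nonempty compact convex } of restrictions of support functions of compact convex subsets of ℝ^N to the unit sphere has empty interior in the Banach space C(S^{N-1}, ℝ) with the supremum norm. -/

import Mathlib

/-- The unit sphere `S^{N-1}` of Euclidean space `ℝ^N`. -/
abbrev UnitSphere (N : ℕ) : Set (EuclideanSpace ℝ (Fin N)) :=
  Metric.sphere (0 : EuclideanSpace ℝ (Fin N)) 1

/-- The support function `h_K(z) = sup_{x ∈ K} ⟪x, z⟫` of a set `K ⊆ ℝ^N`. -/
noncomputable def suppFn {N : ℕ} (K : Set (EuclideanSpace ℝ (Fin N)))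
    (z : EuclideanSpace ℝ (Fin N)) : ℝ :=
  sSup ((fun x => (inner ℝ x z : ℝ)) '' K)

/-- The set of restrictions to the unit sphere of support functions of nonempty compact
convex subsets of `ℝ^N`, viewed inside `C(S^{N-1}, ℝ)`. -/
def restrictedSuppFns (N : ℕ) : Set C(UnitSphere N, ℝ) :=
  {g | ∃ K : Set (EuclideanSpace ℝ (Fin N)), K.Nonempty ∧ IsCompact K ∧ Convex ℝ K ∧
    ∀ z : UnitSphere N, g z = suppFn K (z : EuclideanSpace ℝ (Fin N))}

/-! Support functions of bounded sets are Lipschitz, so the set in question lies in the linear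
subspace of Lipschitz functions in `C(S^{N-1}, ℝ)`. A linear subspace with nonempty interior is the
whole space, yet `z ↦ √‖z - p‖` is continuous and not Lipschitz, because for `N ≥ 2` the sphere
has no isolated points. -/

open Metric Filter Topology NNReal

theorem suppFn_le_add_mul_dist {N : ℕ} {K : Set (EuclideanSpace ℝ (Fin N))} (hK : K.Nonempty)
    {R : ℝ} (hR : ∀ x ∈ K, ‖x‖ ≤ R) (u v : EuclideanSpace ℝ (Fin N)) :
    suppFn K u ≤ suppFn K v + R * dist u v := by
  have hbdd : BddAbove ((fun x => inner ℝ x v) '' K) := by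
    refine ⟨R * ‖v‖, ?_⟩
    rintro _ ⟨x, hx, rfl⟩
    exact (real_inner_le_norm x v).trans (by gcongr; exact hR x hx)
  refine csSup_le (hK.image _) ?_
  rintro _ ⟨x, hx, rfl⟩
  calc inner ℝ x u = inner ℝ x v + inner ℝ x (u - v) := by rw [inner_sub_right]; ring
    _ ≤ suppFn K v + R * dist u v := by
      gcongr
      · exact le_csSup hbdd ⟨x, hx, rfl⟩
      · rw [dist_eq_norm]
        exact (real_inner_le_norm x (u - v)).trans (by gcongr; exact hR x hx)

theorem Bornology.IsBounded.exists_lipschitzWith_suppFn {N : ℕ}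
    {K : Set (EuclideanSpace ℝ (Fin N))} (hb : Bornology.IsBounded K) (hK : K.Nonempty) :
    ∃ C, LipschitzWith C (suppFn K) := by
  obtain ⟨R, hR⟩ := hb.subset_closedBall 0
  exact ⟨_, .of_le_add_mul' R <| suppFn_le_add_mul_dist hK fun x hx => by simpa using hR hx⟩

theorem exists_lipschitzWith_of_mem_restrictedSuppFns {N : ℕ} {g : C(UnitSphere N, ℝ)}
    (hg : g ∈ restrictedSuppFns N) : ∃ C, LipschitzWith C g := by
  obtain ⟨K, hne, hcomp, -, hgK⟩ := hg
  obtain ⟨C, hC⟩ := hcomp.isBounded.exists_lipschitzWith_suppFn hne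
  rw [show ⇑g = suppFn K ∘ Subtype.val from funext hgK]
  exact ⟨_, hC.comp (LipschitzWith.subtype_val _)⟩

theorem not_lipschitzWith_sqrt_dist {X : Type*} [MetricSpace X] (x₀ : X) [(𝓝[≠] x₀).NeBot]
    (K : ℝ≥0) :
    ¬ LipschitzWith K fun x => √(dist x x₀) := by
  intro hK
  have h_large : ∀ᶠ x in 𝓝[≠] x₀, 1 ≤ K * √(dist x x₀) := by
    filter_upwards [self_mem_nhdsWithin] with x hx
    have hpos : 0 < √(dist x x₀) := Real.sqrt_pos.2 (dist_pos.2 hx)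
    have h : √(dist x x₀) ≤ K * dist x x₀ := by
      simpa [Real.dist_eq, abs_of_pos hpos] using hK.dist_le_mul x x₀
    refine (le_mul_iff_one_le_left hpos).1 (h.trans_eq ?_)
    rw [mul_assoc, Real.mul_self_sqrt dist_nonneg]
  have h_small : ∀ᶠ x in 𝓝[≠] x₀, K * √(dist x x₀) < 1 := by
    have : Tendsto (fun x => (K : ℝ) * √(dist x x₀)) (𝓝 x₀) (𝓝 0) :=
      ((continuous_id.dist continuous_const).sqrt.const_mul _).tendsto' x₀ 0 (by simp)
    exact tendsto_nhdsWithin_of_tendsto_nhds this |>.eventually (gt_mem_nhds one_pos)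
  obtain ⟨x, h1, h2⟩ := (h_large.and h_small).exists
  exact h2.not_ge h1

namespace ContinuousMap

variable (X : Type*) [MetricSpace X] [CompactSpace X]

def lipschitzSubmodule : Submodule ℝ C(X, ℝ) where
  carrier := {f | ∃ K, LipschitzWith K f}
  add_mem' := fun ⟨_, hf⟩ ⟨_, hg⟩ => ⟨_, hf.add hg⟩
  zero_mem' := ⟨0, LipschitzWith.const 0⟩
  smul_mem' c := fun ⟨_, hf⟩ => ⟨_, (lipschitzWith_smul c).comp hf⟩

variable {X}

theorem interior_lipschitzSubmodule_eq_empty [PerfectSpace X] [Nonempty X] :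
    interior (lipschitzSubmodule X : Set C(X, ℝ)) = ∅ := by
  by_contra h
  have htop := (lipschitzSubmodule X).eq_top_of_nonempty_interior' (Set.nonempty_iff_ne_empty.2 h)
  obtain ⟨x₀⟩ := ‹Nonempty X›
  obtain ⟨K, hK⟩ : ⟨fun x => √(dist x x₀), by fun_prop⟩ ∈ lipschitzSubmodule X :=
    htop ▸ Submodule.mem_top
  exact not_lipschitzWith_sqrt_dist x₀ K hK

end ContinuousMap

theorem NormedSpace.sphere_nontrivial {E : Type*} [NormedAddCommGroup E] [NormedSpace ℝ E]
    [Nontrivial E] (x : E) {r : ℝ} (hr : 0 < r) : (sphere x r).Nontrivial := by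
  obtain ⟨y, hy⟩ := (NormedSpace.sphere_nonempty (x := x)).2 hr.le
  refine ⟨y, hy, 2 • x - y, ?_, ?_⟩
  · rw [mem_sphere_iff_norm] at hy ⊢
    rw [two_smul, show x + x - y - x = -(y - x) by abel, norm_neg, hy]
  · intro h
    rw [two_smul, eq_sub_iff_add_eq, ← two_smul ℝ, ← two_smul ℝ, smul_right_inj two_ne_zero] at h
    subst h
    simp only [mem_sphere_iff_norm, sub_self, norm_zero] at hy
    exact hr.ne hy

theorem perfectSpace_sphere {E : Type*} [NormedAddCommGroup E] [NormedSpace ℝ E]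
    (hE : 1 < Module.rank ℝ E) (x : E) {r : ℝ} (hr : 0 < r) : PerfectSpace (sphere x r) :=
  have : Nontrivial E := rank_pos_iff_nontrivial.1 (zero_lt_one.trans hE)
  have := isConnected_iff_connectedSpace.1 (isConnected_sphere hE x hr.le)
  have := (NormedSpace.sphere_nontrivial x hr).coe_sort
  inferInstance

/-- For `N ≥ 2`, the set of restrictions to the unit sphere of support functions of
nonempty compact convex subsets of `ℝ^N` has empty interior in `C(S^{N-1}, ℝ)` with the
supremum norm. -/
theorem interior_restrictedSuppFns_eq_empty {N : ℕ} (hN : 2 ≤ N) :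
    interior (restrictedSuppFns N) = ∅ := by
  have hrank : 1 < Module.rank ℝ (EuclideanSpace ℝ (Fin N)) := by
    rw [← Module.finrank_eq_rank, finrank_euclideanSpace_fin]
    exact_mod_cast hN
  have := perfectSpace_sphere hrank 0 one_pos
  have : Nonempty (UnitSphere N) := ⟨⟨EuclideanSpace.single ⟨0, by omega⟩ 1, by simp⟩⟩
  refine Set.subset_empty_iff.1 ?_
  calc interior (restrictedSuppFns N)
      ⊆ interior (ContinuousMap.lipschitzSubmodule (UnitSphere N)) :=
        interior_mono fun g hg => exists_lipschitzWith_of_mem_restrictedSuppFns hg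
    _ = ∅ := ContinuousMap.interior_lipschitzSubmodule_eq_empty
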